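/- For every n, k ≥ 0 and any weight sequence (a_j), θ_{n,k}(t) = ∑_{j=0}^{k} t^j · θ_{n,j}(1) · (1-t)^{k-j} · θ_{n,k-j}(0), where θ_{n,j}(1) = h_j(a_1,...,a_n) is the complete homogeneous symmetric polynomial and θ_{n,k-j}(0) = e_{k-j}(a_1,...,a_n) is the elementary symmetric polynomial. -/

import Mathlib

/-
Sorting identifies weakly decreasing tuples with multisets `N` of size `k` supported in
`{1, …, n}`, and turns `σ(ℓ)` into `k - #N.toFinset`: a position starts an adjacent equality
exactly when it is not the last occurrence of its value. Expanding
`t ^ (k - d) = t ^ (k - d) ((1 - t) + t) ^ d` over the subsets `T` of the support of `N` and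
reindexing by `(N, T) ↦ (N - T, T)`, a multiset of size `k - #T` together with a set of size `#T`,
splits the sum into the products `θ_{n,k-#T}(1) θ_{n,#T}(0)`.
-/

/-- The set of weakly decreasing `k`-tuples with entries in `{1,...,n}`. -/
def multisetTuples (n k : ℕ) : Finset (Fin k → ℕ) :=
  (Fintype.piFinset fun _ : Fin k => Finset.Icc 1 n).filter
    fun ℓ => ∀ i j : Fin k, i ≤ j → ℓ j ≤ ℓ i

/-- The number of adjacent equalities `ℓ_j = ℓ_{j+1}` in a tuple. -/
def sigmaEq {k : ℕ} (ℓ : Fin k → ℕ) : ℕ :=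
  (Finset.univ.filter fun p : Fin k × Fin k =>
    (p.2 : ℕ) = (p.1 : ℕ) + 1 ∧ ℓ p.1 = ℓ p.2).card

/-- The set of strictly decreasing `k`-tuples with entries in `{1,...,n}`. -/
def setTuples (n k : ℕ) : Finset (Fin k → ℕ) :=
  (Fintype.piFinset fun _ : Fin k => Finset.Icc 1 n).filter
    fun ℓ => ∀ i j : Fin k, i < j → ℓ j < ℓ i

/-- The interpolated weighted multiset sum θ_{n,k}(t) for weight sequence a. -/
noncomputable def theta (a : ℕ → ℝ) (n k : ℕ) (t : ℝ) : ℝ :=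
  ∑ ℓ ∈ multisetTuples n k, (∏ i, a (ℓ i)) * t ^ sigmaEq ℓ

open Finset

def lastOccurrences {ι β : Type*} [Fintype ι] [LinearOrder ι] [DecidableEq β] (f : ι → β) :
    Finset ι :=
  {i | ∀ j, f j = f i → j ≤ i}

lemma card_lastOccurrences {ι β : Type*} [Fintype ι] [LinearOrder ι] [DecidableEq β]
    (f : ι → β) : #(lastOccurrences f) = #(univ.image f) := by
  refine card_bij (fun i _ => f i) (fun i _ => mem_image_of_mem f (mem_univ i)) ?_ ?_
  · intro i hi j hj hij
    simp only [lastOccurrences, mem_filter, mem_univ, true_and] at hi hj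
    exact le_antisymm (hj i hij) (hi j hij.symm)
  · intro b hb
    obtain ⟨i, -, rfl⟩ := mem_image.1 hb
    obtain ⟨m, hm, hmax⟩ := exists_max_image {j | f j = f i} id ⟨i, by simp⟩
    simp only [mem_filter, mem_univ, true_and] at hm hmax
    exact ⟨m, by simpa [lastOccurrences, hm] using hmax, hm⟩

lemma sigmaEq_eq_card_compl_lastOccurrences {k : ℕ} {ℓ : Fin k → ℕ} (hℓ : Antitone ℓ) :
    sigmaEq ℓ = #(lastOccurrences ℓ)ᶜ := by
  refine card_bij (fun p _ => p.1) ?_ ?_ ?_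
  · rintro ⟨i, j⟩ h
    simp only [lastOccurrences, mem_compl, mem_filter, mem_univ, true_and, not_forall,
      not_le] at h ⊢
    exact ⟨j, h.2.symm, Fin.lt_def.2 (by omega)⟩
  · rintro ⟨i, j⟩ h ⟨i', j'⟩ h' (rfl : i = i')
    simp only [mem_filter, mem_univ, true_and] at h h'
    exact Prod.ext rfl (Fin.ext (h.1.trans h'.1.symm))
  · intro i hi
    simp only [lastOccurrences, mem_compl, mem_filter, mem_univ, true_and, not_forall,
      not_le] at hi
    obtain ⟨j, hji, hij⟩ := hi
    have hsucc : (i : ℕ) + 1 < k := by have := Fin.lt_def.1 hij; omega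
    set i' : Fin k := ⟨i + 1, hsucc⟩
    have hle : i ≤ i' := Fin.le_def.2 (by simp [i'])
    have hle' : i' ≤ j := Fin.le_def.2 (by simp only [i']; have := Fin.lt_def.1 hij; omega)
    refine ⟨(i, i'), ?_, rfl⟩
    simp only [mem_filter, mem_univ, true_and]
    exact ⟨rfl, le_antisymm (hji ▸ hℓ hle') (hℓ hle)⟩

lemma sigmaEq_add_card_image {k : ℕ} {ℓ : Fin k → ℕ} (hℓ : Antitone ℓ) :
    sigmaEq ℓ + #(univ.image ℓ) = k := by
  rw [sigmaEq_eq_card_compl_lastOccurrences hℓ, ← card_lastOccurrences, card_compl_add_card,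
    Fintype.card_fin]

section Multisets

variable {α : Type*} [DecidableEq α]

def multisetsOfCard (s : Finset α) (k : ℕ) : Finset (Multiset α) :=
  (s.sym k).map ⟨(↑), Sym.coe_injective⟩

lemma mem_multisetsOfCard {s : Finset α} {k : ℕ} {N : Multiset α} :
    N ∈ multisetsOfCard s k ↔ Multiset.card N = k ∧ ∀ x ∈ N, x ∈ s := by
  constructor
  · intro h
    obtain ⟨m, hm, rfl⟩ := mem_map.1 h
    exact ⟨m.2, mem_sym_iff.1 hm⟩
  · rintro ⟨hcard, hs⟩
    exact mem_map.2 ⟨⟨N, hcard⟩, mem_sym_iff.2 hs, rfl⟩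

lemma card_toFinset_le_of_mem_multisetsOfCard {s : Finset α} {k : ℕ} {N : Multiset α}
    (hN : N ∈ multisetsOfCard s k) : #N.toFinset ≤ k :=
  (mem_multisetsOfCard.1 hN).1 ▸ Multiset.toFinset_card_le N

lemma val_le_of_subset_toFinset {N : Multiset α} {T : Finset α} (hT : T ⊆ N.toFinset) :
    T.val ≤ N :=
  (val_le_iff.2 hT).trans (Multiset.dedup_le N)

lemma sub_val_mem_multisetsOfCard {s : Finset α} {k : ℕ} {N : Multiset α} {T : Finset α}
    (hN : N ∈ multisetsOfCard s k) (hT : T ⊆ N.toFinset) :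
    N - T.val ∈ multisetsOfCard s (k - #T) := by
  obtain ⟨hcard, hs⟩ := mem_multisetsOfCard.1 hN
  refine mem_multisetsOfCard.2
    ⟨?_, fun x hx => hs x (Multiset.mem_of_le (Multiset.sub_le_self _ _) hx)⟩
  rw [Multiset.card_sub (val_le_of_subset_toFinset hT), hcard, card_val]

lemma add_val_mem_multisetsOfCard {s : Finset α} {j m : ℕ} {M : Multiset α} {P : Finset α}
    (hM : M ∈ multisetsOfCard s j) (hP : P ∈ powersetCard m s) :
    M + P.val ∈ multisetsOfCard s (j + m) := by
  obtain ⟨hcard, hs⟩ := mem_multisetsOfCard.1 hM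
  obtain ⟨hPs, hPcard⟩ := mem_powersetCard.1 hP
  refine mem_multisetsOfCard.2 ⟨by simp [hcard, hPcard], fun x hx => ?_⟩
  rcases Multiset.mem_add.1 hx with hx | hx
  exacts [hs x hx, hPs hx]

lemma filter_nodup_multisetsOfCard (s : Finset α) (k : ℕ) :
    (multisetsOfCard s k).filter Multiset.Nodup =
      (powersetCard k s).map ⟨Finset.val, val_injective⟩ := by
  ext N
  simp only [mem_filter, mem_multisetsOfCard, mem_map, mem_powersetCard,
    Function.Embedding.coeFn_mk]
  constructor
  · rintro ⟨⟨hcard, hs⟩, hN⟩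
    exact ⟨⟨N, hN⟩, ⟨hs, hcard⟩, rfl⟩
  · rintro ⟨P, ⟨hP, hcard⟩, rfl⟩
    exact ⟨⟨hcard, fun x hx => hP hx⟩, P.nodup⟩

lemma sum_sigma_powerset_toFinset_eq {β : Type*} [AddCommMonoid β] (s : Finset α) (k : ℕ)
    (g : Multiset α → Finset α → β) :
    ∑ x ∈ (multisetsOfCard s k).sigma fun N => N.toFinset.powerset, g x.1 x.2 =
      ∑ x ∈ (range (k + 1)).sigma fun j => multisetsOfCard s j ×ˢ powersetCard (k - j) s,
        g (x.2.1 + x.2.2.val) x.2.2 := by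
  refine sum_nbij' (fun x => ⟨k - #x.2, x.1 - x.2.val, x.2⟩)
    (fun x => ⟨x.2.1 + x.2.2.val, x.2.2⟩) ?_ ?_ ?_ ?_ ?_
  · rintro ⟨N, T⟩ hx
    simp only [mem_sigma, mem_powerset, mem_range, mem_product, mem_powersetCard] at hx ⊢
    obtain ⟨hN, hT⟩ := hx
    have hTk := (card_le_card hT).trans (card_toFinset_le_of_mem_multisetsOfCard hN)
    refine ⟨by omega, sub_val_mem_multisetsOfCard hN hT, fun x hx => ?_, by omega⟩
    exact (mem_multisetsOfCard.1 hN).2 x (Multiset.mem_toFinset.1 (hT hx))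
  · rintro ⟨j, M, P⟩ hx
    simp only [mem_sigma, mem_powerset, mem_range, mem_product] at hx ⊢
    obtain ⟨hj, hM, hP⟩ := hx
    refine ⟨?_, fun x hx => Multiset.mem_toFinset.2 (Multiset.mem_add.2 (Or.inr hx))⟩
    simpa [show j + (k - j) = k by omega] using add_val_mem_multisetsOfCard hM hP
  · rintro ⟨N, T⟩ hx
    simp only [mem_sigma, mem_powerset] at hx
    simp [tsub_add_cancel_of_le (val_le_of_subset_toFinset hx.2)]
  · rintro ⟨j, M, P⟩ hx
    simp only [mem_sigma, mem_range, mem_product, mem_powersetCard] at hx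
    obtain ⟨hj, -, -, hP⟩ := hx
    simp [hP, show k - (k - j) = j by omega]
  · rintro ⟨N, T⟩ hx
    simp only [mem_sigma, mem_powerset] at hx
    simp [tsub_add_cancel_of_le (val_le_of_subset_toFinset hx.2)]

variable {R : Type*} [CommRing R]

lemma pow_sub_card_eq_sum_powerset {ι : Type*} (t : R) (s : Finset ι) {k : ℕ} (hs : #s ≤ k) :
    t ^ (k - #s) = ∑ T ∈ s.powerset, t ^ (k - #T) * (1 - t) ^ #T := by
  calc t ^ (k - #s) = t ^ (k - #s) * ((1 - t) + t) ^ #s := by simp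
    _ = ∑ T ∈ s.powerset, t ^ (k - #s) * ((1 - t) ^ #T * t ^ (#s - #T)) := by
      rw [← sum_pow_mul_eq_add_pow, mul_sum]
    _ = _ := sum_congr rfl fun T hT => by
      have := card_le_card (mem_powerset.1 hT)
      rw [show k - #T = (k - #s) + (#s - #T) by omega, pow_add]
      ring

lemma sum_multisetsOfCard_mul_pow_eq (s : Finset α) (f : α → R) (k : ℕ) (t : R) :
    ∑ N ∈ multisetsOfCard s k, (N.map f).prod * t ^ (k - #N.toFinset) =
      ∑ j ∈ range (k + 1), t ^ j * (∑ M ∈ multisetsOfCard s j, (M.map f).prod) *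
        (1 - t) ^ (k - j) * ∑ P ∈ powersetCard (k - j) s, ∏ i ∈ P, f i := by
  calc _ = ∑ x ∈ (multisetsOfCard s k).sigma fun N => N.toFinset.powerset,
          (x.1.map f).prod * (t ^ (k - #x.2) * (1 - t) ^ #x.2) := by
        rw [sum_sigma]
        refine sum_congr rfl fun N hN => ?_
        rw [pow_sub_card_eq_sum_powerset t _ (card_toFinset_le_of_mem_multisetsOfCard hN),
          mul_sum]
    _ = ∑ x ∈ (range (k + 1)).sigma fun j => multisetsOfCard s j ×ˢ powersetCard (k - j) s,
          ((x.2.1 + x.2.2.val).map f).prod * (t ^ (k - #x.2.2) * (1 - t) ^ #x.2.2) :=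
        sum_sigma_powerset_toFinset_eq s k fun N T =>
          (N.map f).prod * (t ^ (k - #T) * (1 - t) ^ #T)
    _ = ∑ x ∈ (range (k + 1)).sigma fun j => multisetsOfCard s j ×ˢ powersetCard (k - j) s,
          t ^ x.1 * (x.2.1.map f).prod * (1 - t) ^ (k - x.1) * ∏ i ∈ x.2.2, f i := by
        refine sum_congr rfl fun ⟨j, M, P⟩ hx => ?_
        simp only [mem_sigma, mem_range, mem_product, mem_powersetCard] at hx
        obtain ⟨hj, -, -, hP⟩ := hx
        rw [Multiset.map_add, Multiset.prod_add, hP, show k - (k - j) = j by omega,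
          prod_eq_multiset_prod]
        ring
    _ = _ := by
        rw [sum_sigma]
        refine sum_congr rfl fun j _ => ?_
        simp only [sum_product, mul_sum, sum_mul]
        exact sum_comm

end Multisets

lemma mem_multisetTuples {n k : ℕ} {ℓ : Fin k → ℕ} :
    ℓ ∈ multisetTuples n k ↔ (∀ i, ℓ i ∈ Icc 1 n) ∧ Antitone ℓ := by
  simp [multisetTuples, Antitone]

lemma theta_eq_sum_multisetsOfCard (a : ℕ → ℝ) (n k : ℕ) (t : ℝ) :
    theta a n k t =
      ∑ N ∈ multisetsOfCard (Icc 1 n) k, (N.map a).prod * t ^ (k - #N.toFinset) := by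
  refine sum_nbij (fun ℓ => (List.ofFn ℓ : Multiset ℕ)) ?_ ?_ ?_ ?_
  · intro ℓ hℓ
    refine mem_multisetsOfCard.2 ⟨by simp, fun x hx => ?_⟩
    obtain ⟨i, rfl⟩ := List.mem_ofFn.1 (Multiset.mem_coe.1 hx)
    exact (mem_multisetTuples.1 hℓ).1 i
  · intro ℓ hℓ ℓ' hℓ' h
    exact List.ofFn_injective ((Multiset.coe_eq_coe.1 h).eq_of_sortedGE
      (mem_multisetTuples.1 hℓ).2.sortedGE_ofFn (mem_multisetTuples.1 hℓ').2.sortedGE_ofFn)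
  · intro N hN
    obtain ⟨hcard, hs⟩ := mem_multisetsOfCard.1 hN
    set L := N.sort (· ≥ ·)
    have hlen : L.length = k := by simp [L, hcard]
    refine ⟨fun i => L.get (i.cast hlen.symm), mem_multisetTuples.2 ⟨fun i => hs _ ?_, ?_⟩, ?_⟩
    · exact (Multiset.mem_sort _).1 (L.get_mem _)
    · exact (Multiset.pairwise_sort N _).sortedGE.antitone_get.comp_monotone
        (Fin.cast_strictMono _).monotone
    · dsimp only
      rw [← List.ofFn_congr hlen, List.ofFn_get]
      exact Multiset.sort_eq N _
  · intro ℓ hℓ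
    have hsupp : (List.ofFn ℓ : Multiset ℕ).toFinset = univ.image ℓ := by
      ext x; simp [List.mem_ofFn, eq_comm]
    have := sigmaEq_add_card_image (mem_multisetTuples.1 hℓ).2
    rw [Multiset.map_coe, Multiset.prod_coe, List.map_ofFn, List.prod_ofFn, hsupp]
    congr 2
    omega

lemma theta_one (a : ℕ → ℝ) (n k : ℕ) :
    theta a n k 1 = ∑ M ∈ multisetsOfCard (Icc 1 n) k, (M.map a).prod := by
  simp [theta_eq_sum_multisetsOfCard]

lemma theta_zero (a : ℕ → ℝ) (n k : ℕ) :
    theta a n k 0 = ∑ P ∈ powersetCard k (Icc 1 n), ∏ i ∈ P, a i := by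
  have hzero : ∀ N ∈ multisetsOfCard (Icc 1 n) k,
      (N.map a).prod * 0 ^ (k - #N.toFinset) = if N.Nodup then (N.map a).prod else 0 := by
    intro N hN
    have hcard := (mem_multisetsOfCard.1 hN).1
    have := Multiset.toFinset_card_le N
    simp only [← Multiset.toFinset_card_eq_card_iff_nodup, zero_pow_eq]
    split_ifs <;> first | omega | simp
  rw [theta_eq_sum_multisetsOfCard, sum_congr rfl hzero, ← sum_filter,
    filter_nodup_multisetsOfCard, sum_map]
  rfl

theorem theta_decomposition (a : ℕ → ℝ) (n k : ℕ) (t : ℝ) :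
    theta a n k t =
      ∑ j ∈ Finset.range (k + 1),
        t ^ j * theta a n j 1 * (1 - t) ^ (k - j) * theta a n (k - j) 0 := by
  rw [theta_eq_sum_multisetsOfCard, sum_multisetsOfCard_mul_pow_eq]
  refine sum_congr rfl fun j _ => ?_
  rw [theta_one, theta_zero]
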